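/- (Causality) Let H be a complex Hilbert space, let M₀, M₁ : H → H be bounded linear operators with M₀ selfadjoint, such that ρM₀ + Re M₁ ≥ c for some c ∈ ]0,∞[ and all sufficiently large ρ ∈ ]0,∞[, and let A : D(A) ⊆ H → H be skew-selfadjoint. Then for all sufficiently large ρ ∈ ]0,∞[ and all a ∈ ℝ: χ_{(−∞,a]}(closure(∂₀M₀ + M₁ + A))⁻¹ = χ_{(−∞,a]}(closure(∂₀M₀ + M₁ + A))⁻¹ χ_{(−∞,a]}, i.e. the solution operator is causal. -/

import Mathlib

/-!
STATEMENT 6 (Causality): If `ρM₀ + Re M₁ ≥ c > 0` for all sufficiently large `ρ > 0`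
and `A` is skew-selfadjoint, then for all sufficiently large `ρ > 0` and all `a ∈ ℝ`
the solution operator `(closure(∂₀M₀ + M₁ + A))⁻¹` is causal:
`χ_{(-∞,a]} (closure(∂₀M₀ + M₁ + A))⁻¹ = χ_{(-∞,a]} (closure(∂₀M₀ + M₁ + A))⁻¹ χ_{(-∞,a]}`.
-/

noncomputable section
open MeasureTheory Filter Topology Set

/-- The exponentially weighted Lebesgue measure `exp(-2ρt) dt` on `ℝ`. -/
def wMeasure (ρ : ℝ) : Measure ℝ :=
  volume.withDensity fun t => ENNReal.ofReal (Real.exp (-2 * ρ * t))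

/-- The weighted space `H_ρ(ℝ,H)`. -/
abbrev Hw (H : Type*) [NormedAddCommGroup H] (ρ : ℝ) : Type _ := Lp H 2 (wMeasure ρ)

variable {H : Type*} [NormedAddCommGroup H] [InnerProductSpace ℂ H] [CompleteSpace H]

/-- `D` is `∂₀`, i.e. the closure in `H_ρ(ℝ,H)` of differentiation on `C¹` compactly
supported functions: its graph is the closure of the graph of the classical
derivative on `C¹` compactly supported functions. -/
def IsTimeDeriv (ρ : ℝ) (D : Hw H ρ →ₗ.[ℂ] Hw H ρ) : Prop :=
  (D.graph : Set (Hw H ρ × Hw H ρ)) = closure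
    {p : Hw H ρ × Hw H ρ | ∃ g : ℝ → H, ContDiff ℝ 1 g ∧ HasCompactSupport g ∧
      ⇑p.1 =ᵐ[wMeasure ρ] g ∧ ⇑p.2 =ᵐ[wMeasure ρ] deriv g}

/-- `Al` is the pointwise lift to `H_ρ(ℝ,H)` of the (possibly unbounded) operator `A`
on `H`: its domain is `{u : u(t) ∈ D(A) a.e. and (t ↦ A u(t)) ∈ H_ρ(ℝ,H)}` and it acts
as `(Al u)(t) = A (u(t))`. -/
def IsPointwiseLift (ρ : ℝ) (A : H →ₗ.[ℂ] H) (Al : Hw H ρ →ₗ.[ℂ] Hw H ρ) : Prop :=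
  ∀ u v : Hw H ρ, (u, v) ∈ Al.graph ↔
    ∀ᵐ t ∂(wMeasure ρ), ∃ h : u t ∈ A.domain, A ⟨u t, h⟩ = v t

/-- A densely defined closed operator `A` is skew-selfadjoint if `A* = -A`. -/
def IsSkewSelfAdjointP (A : H →ₗ.[ℂ] H) : Prop :=
  Dense (A.domain : Set H) ∧ A.IsClosed ∧ A.adjoint = -A

/-- The real part `(1/2)(M + M*)` of a bounded operator. -/
def reOp (M : H →L[ℂ] H) : H →L[ℂ] H := (2 : ℂ)⁻¹ • (M + ContinuousLinearMap.adjoint M)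

/-- The pointwise (in time) lift of a bounded operator on `H` to `H_ρ(ℝ,H)`. -/
def liftL (ρ : ℝ) (M : H →L[ℂ] H) : Hw H ρ →L[ℂ] Hw H ρ :=
  ContinuousLinearMap.compLpL 2 (wMeasure ρ) M

/-- The operator `∂₀M₀ + M₁ + A` with domain `D(∂₀) ∩ D(A)` in `H_ρ(ℝ,H)`,
where `D` plays the role of `∂₀` and `Al` the role of (the lift of) `A`. -/
def evo (ρ : ℝ) (M0 M1 : H →L[ℂ] H) (D Al : Hw H ρ →ₗ.[ℂ] Hw H ρ) :
    Hw H ρ →ₗ.[ℂ] Hw H ρ :=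
  ((liftL ρ M1 : Hw H ρ →ₗ[ℂ] Hw H ρ)) +ᵥ
    ((⟨D.domain, ((liftL ρ M0 : Hw H ρ →ₗ[ℂ] Hw H ρ)).comp D.toFun⟩ : Hw H ρ →ₗ.[ℂ] Hw H ρ)
      + Al)

/-- `S` is the everywhere defined continuous inverse of the operator `T`. -/
def IsInverseOf {E : Type*} [NormedAddCommGroup E] [NormedSpace ℂ E]
    (S : E →L[ℂ] E) (T : E →ₗ.[ℂ] E) : Prop :=
  (∀ f : E, (S f, f) ∈ T.graph) ∧ ∀ u : T.domain, S (T u) = u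

/-- `χ` is the temporal cut-off operator, i.e. multiplication by the characteristic
function of the time interval `(-∞, a]`. -/
def IsCutoff (ρ a : ℝ) (χ : Hw H ρ →L[ℂ] Hw H ρ) : Prop :=
  ∀ u : Hw H ρ, ⇑(χ u) =ᵐ[wMeasure ρ] Set.indicator (Set.Iic a) ⇑u

/-!
On the graph of the closure of `∂₀M₀ + M₁ + A` one has `c ‖χ u‖² ≤ Re ⟨χ u, f⟩`. The
skew-selfadjoint part contributes nothing, and integrating by parts over `(-∞, a]` against the
weight `exp (-2ρt)` gives `Re ⟨χ u, M₀ ∂₀ u⟩ ≥ ρ Re ⟨χ u, M₀ u⟩`, because the boundary term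
`exp (-2ρa) ⟨u a, M₀ (u a)⟩` is nonnegative (`M₀ ≥ 0` follows from the hypothesis as `ρ → ∞`).
For `u = S (f - χ f)` the right-hand side vanishes, since `f - χ f` lives on `(a, ∞)`; hence
`χ S (f - χ f) = 0`.
-/

section InnerProduct

variable {E : Type*} [NormedAddCommGroup E] [InnerProductSpace ℂ E]

lemma nonneg_of_forall_le_mul_add {ρ₀ b m k : ℝ} (h : ∀ ρ > ρ₀, b ≤ ρ * m + k) : 0 ≤ m := by
  by_contra! hm
  have hρ := h (max (ρ₀ + 1) ((k - b) / -m + 1)) (by simp)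
  have hlarge : (k - b) / -m + 1 ≤ max (ρ₀ + 1) ((k - b) / -m + 1) := le_max_right _ _
  have hdiv : (k - b) / -m * -m = k - b := div_mul_cancel₀ _ (by linarith)
  nlinarith

lemma re_inner_reOp_apply [CompleteSpace E] (M : E →L[ℂ] E) (x : E) :
    (inner ℂ x (reOp M x)).re = (inner ℂ x (M x)).re := by
  have hadj : (inner ℂ x (ContinuousLinearMap.adjoint M x)).re = (inner ℂ x (M x)).re := by
    rw [ContinuousLinearMap.adjoint_inner_right, ← RCLike.re_to_complex, inner_re_symm]
    rfl
  simp only [reOp, smul_apply, add_apply, inner_smul_right, inner_add_right, Complex.mul_re,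
    Complex.add_re, hadj]
  norm_num
  ring

lemma re_inner_smul_add_apply (ρ : ℝ) (M₀ M₁ : E →L[ℂ] E) (x : E) :
    (inner ℂ x (((ρ : ℂ) • M₀ + M₁) x)).re =
      ρ * (inner ℂ x (M₀ x)).re + (inner ℂ x (M₁ x)).re := by
  simp [Complex.mul_re]

lemma LinearPMap.re_inner_apply_eq_zero_of_adjoint_eq_neg [CompleteSpace E] {A : E →ₗ.[ℂ] E}
    (hdense : Dense (A.domain : Set E)) (hA : A.adjoint = -A) (x : A.domain) :
    (inner ℂ (x : E) (A x)).re = 0 := by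
  have hformal : (-A).IsFormalAdjoint A := hA ▸ LinearPMap.adjoint_isFormalAdjoint hdense
  have h : inner ℂ (-(A x)) (x : E) = inner ℂ (x : E) (A x) := hformal x x
  rw [inner_neg_left, ← inner_conj_symm] at h
  have := congrArg Complex.re h
  rw [Complex.neg_re, Complex.conj_re] at this
  linarith

lemma hasDerivAt_re_inner_apply_self {M : E →L[ℂ] E} (hM : (M : E →ₗ[ℂ] E).IsSymmetric)
    {g : ℝ → E} {g' : E} {t : ℝ} (hg : HasDerivAt g g' t) :
    HasDerivAt (fun s => (inner ℂ (g s) (M (g s))).re) (2 * (inner ℂ (g t) (M g')).re) t := by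
  have hMg : HasDerivAt (fun s => M (g s)) (M g') t :=
    (M.restrictScalars ℝ).hasFDerivAt.comp_hasDerivAt t hg
  have hsymm : (inner ℂ g' (M (g t))).re = (inner ℂ (g t) (M g')).re := by
    have h := hM g' (g t)
    simp only [ContinuousLinearMap.coe_coe] at h
    rw [← h, ← RCLike.re_to_complex, inner_re_symm]
    rfl
  have := Complex.reCLM.hasFDerivAt.comp_hasDerivAt t (hg.inner ℂ hMg)
  simp only [Function.comp_def, Complex.reCLM_apply, Complex.add_re, hsymm] at this
  exact this.congr_deriv (two_mul _).symm

end InnerProduct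

section Cutoff

variable {α E : Type*} [MeasurableSpace α] {μ : Measure α} [NormedAddCommGroup E]
  [InnerProductSpace ℂ E] {s : Set α} {χ : Lp E 2 μ →L[ℂ] Lp E 2 μ}

lemma inner_cutoff_sub_cutoff (hχ : ∀ u, ⇑(χ u) =ᵐ[μ] s.indicator u) (u w : Lp E 2 μ) :
    inner ℂ (χ u) (w - χ w) = 0 := by
  rw [L2.inner_def]
  refine integral_eq_zero_of_ae ?_
  filter_upwards [hχ u, hχ w, Lp.coeFn_sub w (χ w)] with t hu hw hsub
  rw [hsub, Pi.sub_apply, hu, hw]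
  by_cases ht : t ∈ s <;> simp [ht]

lemma re_inner_cutoff_eq_setIntegral (hs : MeasurableSet s)
    (hχ : ∀ u, ⇑(χ u) =ᵐ[μ] s.indicator u) (u w : Lp E 2 μ) :
    (inner ℂ (χ u) w).re = ∫ t in s, (inner ℂ (u t) (w t)).re ∂μ := by
  have hre := integral_re (L2.integrable_inner (𝕜 := ℂ) (χ u) w)
  simp only [RCLike.re_to_complex] at hre
  rw [L2.inner_def, ← hre, ← integral_indicator hs]
  refine integral_congr_ae ?_
  filter_upwards [hχ u] with t hu
  rw [hu]
  by_cases ht : t ∈ s <;> simp [ht]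

lemma re_inner_cutoff_compLpL (hs : MeasurableSet s) (hχ : ∀ u, ⇑(χ u) =ᵐ[μ] s.indicator u)
    (M : E →L[ℂ] E) (u w : Lp E 2 μ) :
    (inner ℂ (χ u) (M.compLpL 2 μ w)).re = ∫ t in s, (inner ℂ (u t) (M (w t))).re ∂μ := by
  rw [re_inner_cutoff_eq_setIntegral hs hχ]
  refine integral_congr_ae (ae_restrict_of_ae ?_)
  filter_upwards [M.coeFn_compLpL w] with t hM
  rw [hM]

lemma mul_norm_cutoff_sq_le (hs : MeasurableSet s) (hχ : ∀ u, ⇑(χ u) =ᵐ[μ] s.indicator u)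
    {M : E →L[ℂ] E} {c : ℝ} (hM : ∀ x, c * ‖x‖ ^ 2 ≤ (inner ℂ x (M x)).re) (u : Lp E 2 μ) :
    c * ‖χ u‖ ^ 2 ≤ (inner ℂ (χ u) (M.compLpL 2 μ u)).re := by
  have hnorm : ‖χ u‖ ^ 2 = ∫ t in s, ‖u t‖ ^ 2 ∂μ := by
    have hχu : inner ℂ (χ u) (χ u) = inner ℂ (χ u) u := by
      rw [eq_comm, ← sub_eq_zero, ← inner_sub_right, inner_cutoff_sub_cutoff hχ]
    rw [← inner_self_eq_norm_sq (𝕜 := ℂ), RCLike.re_to_complex, hχu,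
      re_inner_cutoff_eq_setIntegral hs hχ]
    exact integral_congr_ae (Eventually.of_forall fun t => inner_self_eq_norm_sq (𝕜 := ℂ) (u t))
  have hint_M : Integrable (fun t => (inner ℂ (u t) (M (u t))).re) μ :=
    (L2.integrable_inner (𝕜 := ℂ) u (M.compLpL 2 μ u)).re.congr <| by
      filter_upwards [M.coeFn_compLpL u] with t hMu
      rw [hMu, RCLike.re_to_complex]
  have hint_norm : Integrable (fun t => ‖u t‖ ^ 2) μ :=
    (memLp_two_iff_integrable_sq_norm (Lp.aestronglyMeasurable u)).1 (Lp.memLp u)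
  rw [hnorm, re_inner_cutoff_compLpL hs hχ, ← integral_const_mul]
  exact setIntegral_mono (hint_norm.const_mul c).integrableOn hint_M.integrableOn
    fun t => hM (u t)

end Cutoff

lemma LinearPMap.graph_closure_subset_closure_graph {R E F : Type*} [CommRing R]
    [AddCommGroup E] [AddCommGroup F] [Module R E] [Module R F] [TopologicalSpace E]
    [TopologicalSpace F] [ContinuousAdd E] [ContinuousAdd F] [TopologicalSpace R]
    [ContinuousSMul R E] [ContinuousSMul R F] (T : E →ₗ.[R] F) :
    (T.closure.graph : Set (E × F)) ⊆ _root_.closure T.graph := by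
  by_cases hT : T.IsClosable
  · rw [← hT.graph_closure_eq_closure_graph, Submodule.topologicalClosure_coe]
  · rw [LinearPMap.closure_def' hT]
    exact subset_closure

lemma setIntegral_wMeasure {E : Type*} [NormedAddCommGroup E] [NormedSpace ℝ E] (ρ : ℝ)
    (s : Set ℝ) (g : ℝ → E) :
    ∫ t in s, g t ∂wMeasure ρ = ∫ t in s, Real.exp (-2 * ρ * t) • g t := by
  rw [wMeasure, setIntegral_withDensity_eq_setIntegral_toReal_smul' s (by fun_prop)
    (ae_of_all _ fun _ => ENNReal.ofReal_lt_top)]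
  simp only [ENNReal.toReal_ofReal (Real.exp_nonneg _)]

lemma integral_Iic_exp_mul_re_inner_deriv_sub_smul_nonneg {E : Type*} [NormedAddCommGroup E]
    [InnerProductSpace ℂ E] {M : E →L[ℂ] E} (hM : (M : E →ₗ[ℂ] E).IsSymmetric)
    (hMpos : ∀ x, 0 ≤ (inner ℂ x (M x)).re) (ρ a : ℝ) {g : ℝ → E} (hg : ContDiff ℝ 1 g)
    (hgs : HasCompactSupport g) :
    0 ≤ ∫ t in Iic a,
      Real.exp (-2 * ρ * t) * (inner ℂ (g t) (M (deriv g t - (ρ : ℂ) • g t))).re := by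
  set F : ℝ → ℝ := fun t => Real.exp (-2 * ρ * t) * (inner ℂ (g t) (M (g t))).re
  have hF : ContDiff ℝ 1 F :=
    (Real.contDiff_exp.comp (contDiff_const.mul contDiff_id)).mul
      (Complex.reCLM.contDiff.comp (hg.inner ℂ ((M.restrictScalars ℝ).contDiff.comp hg)))
  have hFs : HasCompactSupport F :=
    (hgs.comp_left (g := fun x => (inner ℂ x (M x)).re) (by simp)).mul_left
  have hderiv : ∀ t, deriv F t =
      2 * (Real.exp (-2 * ρ * t) * (inner ℂ (g t) (M (deriv g t - (ρ : ℂ) • g t))).re) := by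
    intro t
    have hexp :
        HasDerivAt (fun t => Real.exp (-2 * ρ * t)) (Real.exp (-2 * ρ * t) * (-2 * ρ)) t :=
      ((hasDerivAt_id t).const_mul (-2 * ρ)).exp.congr_deriv (by simp)
    have hFd : HasDerivAt F _ t := hexp.mul (hasDerivAt_re_inner_apply_self hM
      (hg.differentiable one_ne_zero t).hasDerivAt)
    rw [hFd.deriv]
    simp only [map_sub, map_smul, inner_sub_right, inner_smul_right, Complex.sub_re,
      Complex.mul_re, Complex.ofReal_re, Complex.ofReal_im, zero_mul, sub_zero]
    ring
  have hFTC := hFs.integral_Iic_deriv_eq hF a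
  simp only [hderiv, integral_const_mul] at hFTC
  have hFa : 0 ≤ F a := mul_nonneg (Real.exp_nonneg _) (hMpos _)
  linarith

section WeightedSpace

variable {E : Type*} [NormedAddCommGroup E] [InnerProductSpace ℂ E] {ρ a : ℝ}
  {χ : Hw E ρ →L[ℂ] Hw E ρ}

lemma IsTimeDeriv.mul_re_inner_cutoff_le {M : E →L[ℂ] E} (hM : (M : E →ₗ[ℂ] E).IsSymmetric)
    (hMpos : ∀ x, 0 ≤ (inner ℂ x (M x)).re) {D : Hw E ρ →ₗ.[ℂ] Hw E ρ} (hD : IsTimeDeriv ρ D)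
    (hχ : IsCutoff ρ a χ) {v u : Hw E ρ} (h : (v, u) ∈ D.graph) :
    ρ * (inner ℂ (χ v) (liftL ρ M v)).re ≤ (inner ℂ (χ v) (liftL ρ M u)).re := by
  suffices hsub : 0 ≤ (inner ℂ (χ v) (liftL ρ M (u - (ρ : ℂ) • v))).re by
    simp only [map_sub, map_smul, inner_sub_right, inner_smul_right, Complex.sub_re,
      Complex.mul_re, Complex.ofReal_re, Complex.ofReal_im, zero_mul, sub_zero] at hsub
    linarith
  have hclosed : IsClosed {p : Hw E ρ × Hw E ρ |
      0 ≤ (inner ℂ (χ p.1) (liftL ρ M (p.2 - (ρ : ℂ) • p.1))).re} :=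
    isClosed_le continuous_const (by fun_prop)
  rw [IsTimeDeriv] at hD
  refine closure_minimal (fun p hp => ?_) hclosed (by rw [← hD]; exact h)
  obtain ⟨g, hg, hgs, hg₁, hg₂⟩ := hp
  have hcongr : ∫ t in Iic a, (inner ℂ (p.1 t) (M ((p.2 - (ρ : ℂ) • p.1) t))).re ∂wMeasure ρ
      = ∫ t in Iic a, (inner ℂ (g t) (M (deriv g t - (ρ : ℂ) • g t))).re ∂wMeasure ρ := by
    refine integral_congr_ae (ae_restrict_of_ae ?_)
    filter_upwards [hg₁, hg₂, Lp.coeFn_sub p.2 ((ρ : ℂ) • p.1), Lp.coeFn_smul (ρ : ℂ) p.1]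
      with t h₁ h₂ hsub hsmul
    rw [hsub, Pi.sub_apply, hsmul, Pi.smul_apply, h₁, h₂]
  change 0 ≤ (inner ℂ (χ p.1) ((M.compLpL 2 (wMeasure ρ)) (p.2 - (ρ : ℂ) • p.1))).re
  rw [re_inner_cutoff_compLpL measurableSet_Iic hχ, hcongr, setIntegral_wMeasure]
  exact integral_Iic_exp_mul_re_inner_deriv_sub_smul_nonneg hM hMpos ρ a hg hgs

lemma IsPointwiseLift.re_inner_cutoff_eq_zero [CompleteSpace E] {A : E →ₗ.[ℂ] E}
    (hdense : Dense (A.domain : Set E)) (hA : A.adjoint = -A) {Al : Hw E ρ →ₗ.[ℂ] Hw E ρ}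
    (hAl : IsPointwiseLift ρ A Al) (hχ : IsCutoff ρ a χ) {v z : Hw E ρ} (h : (v, z) ∈ Al.graph) :
    (inner ℂ (χ v) z).re = 0 := by
  rw [re_inner_cutoff_eq_setIntegral measurableSet_Iic hχ]
  refine integral_eq_zero_of_ae (ae_restrict_of_ae ?_)
  filter_upwards [(hAl v z).1 h] with t ⟨hdom, hAt⟩
  rw [← hAt]
  exact A.re_inner_apply_eq_zero_of_adjoint_eq_neg hdense hA ⟨v t, hdom⟩

lemma mul_norm_cutoff_sq_le_of_mem_graph_evo [CompleteSpace E] {M₀ M₁ : E →L[ℂ] E} {c : ℝ}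
    (hM₀ : (M₀ : E →ₗ[ℂ] E).IsSymmetric) (hM₀pos : ∀ x, 0 ≤ (inner ℂ x (M₀ x)).re)
    (hcoer : ∀ x, c * ‖x‖ ^ 2 ≤ (inner ℂ x (((ρ : ℂ) • M₀ + M₁) x)).re) {A : E →ₗ.[ℂ] E}
    (hdense : Dense (A.domain : Set E)) (hA : A.adjoint = -A) {D Al : Hw E ρ →ₗ.[ℂ] Hw E ρ}
    (hD : IsTimeDeriv ρ D) (hAl : IsPointwiseLift ρ A Al) (hχ : IsCutoff ρ a χ)
    {u f : Hw E ρ} (h : (u, f) ∈ (evo ρ M₀ M₁ D Al).graph) :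
    c * ‖χ u‖ ^ 2 ≤ (inner ℂ (χ u) f).re := by
  obtain ⟨y, rfl, rfl⟩ := (LinearPMap.mem_graph_iff _).1 h
  have hy : (y : Hw E ρ) ∈ D.domain ⊓ Al.domain := y.2
  have hD_est := hD.mul_re_inner_cutoff_le hM₀ hM₀pos hχ (D.mem_graph ⟨y, hy.1⟩)
  have hA_zero := hAl.re_inner_cutoff_eq_zero hdense hA hχ (Al.mem_graph ⟨y, hy.2⟩)
  have hcut := mul_norm_cutoff_sq_le measurableSet_Iic hχ hcoer (y : Hw E ρ)
  rw [ContinuousLinearMap.add_compLpL, ContinuousLinearMap.smul_compLpL, ← liftL, ← liftL] at hcut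
  change c * ‖χ y‖ ^ 2 ≤ (inner ℂ (χ y)
    (liftL ρ M₁ y + (liftL ρ M₀ (D ⟨y, hy.1⟩) + Al ⟨y, hy.2⟩))).re
  simp only [add_apply, smul_apply, inner_add_right, inner_smul_right, Complex.add_re,
    Complex.mul_re, Complex.ofReal_re, Complex.ofReal_im, zero_mul, sub_zero] at hcut ⊢
  linarith

lemma mul_norm_cutoff_sq_le_of_mem_graph_closure_evo [CompleteSpace E] {M₀ M₁ : E →L[ℂ] E}
    {c : ℝ} (hM₀ : (M₀ : E →ₗ[ℂ] E).IsSymmetric) (hM₀pos : ∀ x, 0 ≤ (inner ℂ x (M₀ x)).re)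
    (hcoer : ∀ x, c * ‖x‖ ^ 2 ≤ (inner ℂ x (((ρ : ℂ) • M₀ + M₁) x)).re) {A : E →ₗ.[ℂ] E}
    (hdense : Dense (A.domain : Set E)) (hA : A.adjoint = -A) {D Al : Hw E ρ →ₗ.[ℂ] Hw E ρ}
    (hD : IsTimeDeriv ρ D) (hAl : IsPointwiseLift ρ A Al) (hχ : IsCutoff ρ a χ)
    {u f : Hw E ρ} (h : (u, f) ∈ (evo ρ M₀ M₁ D Al).closure.graph) :
    c * ‖χ u‖ ^ 2 ≤ (inner ℂ (χ u) f).re := by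
  have hclosed : IsClosed {p : Hw E ρ × Hw E ρ | c * ‖χ p.1‖ ^ 2 ≤ (inner ℂ (χ p.1) p.2).re} :=
    isClosed_le (by fun_prop) (by fun_prop)
  have hmem : (u, f) ∈ closure ((evo ρ M₀ M₁ D Al).graph : Set (Hw E ρ × Hw E ρ)) :=
    (evo ρ M₀ M₁ D Al).graph_closure_subset_closure_graph h
  have hsub : ((evo ρ M₀ M₁ D Al).graph : Set (Hw E ρ × Hw E ρ)) ⊆
      {p | c * ‖χ p.1‖ ^ 2 ≤ (inner ℂ (χ p.1) p.2).re} := fun p hp =>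
    mul_norm_cutoff_sq_le_of_mem_graph_evo hM₀ hM₀pos hcoer hdense hA hD hAl hχ hp
  simpa only [Set.mem_ofPred_eq] using closure_minimal hsub hclosed hmem

end WeightedSpace

lemma ContinuousLinearMap.comp_eq_comp_comp_of_coercive {E : Type*} [NormedAddCommGroup E]
    [InnerProductSpace ℂ E] {χ S : E →L[ℂ] E} {c : ℝ} (hc : 0 < c)
    (hχ : ∀ u w, inner ℂ (χ u) (w - χ w) = 0)
    (hS : ∀ f, c * ‖χ (S f)‖ ^ 2 ≤ (inner ℂ (χ (S f)) f).re) :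
    χ.comp S = (χ.comp S).comp χ := by
  ext f
  have hzero : χ (S (f - χ f)) = 0 := by
    have h := hS (f - χ f)
    rw [hχ, Complex.zero_re] at h
    have : ‖χ (S (f - χ f))‖ ^ 2 ≤ 0 := nonpos_of_mul_nonpos_right h hc
    simpa using this
  simpa [sub_eq_zero] using hzero

theorem evo_solution_operator_causal
    (H : Type*) [NormedAddCommGroup H] [InnerProductSpace ℂ H] [CompleteSpace H]
    (M0 M1 : H →L[ℂ] H) (hM0 : IsSelfAdjoint M0)
    (A : H →ₗ.[ℂ] H) (hA : IsSkewSelfAdjointP A)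
    (c : ℝ) (hc : 0 < c)
    (hpos : ∃ ρ₀ > (0 : ℝ), ∀ ρ ∈ Set.Ioi ρ₀, ∀ x : H,
      c * ‖x‖ ^ 2 ≤ (inner ℂ x (((ρ : ℂ) • M0 + reOp M1) x) : ℂ).re) :
    ∃ ρ₁ > (0 : ℝ), ∀ ρ ∈ Set.Ioi ρ₁, ∀ D Al : Hw H ρ →ₗ.[ℂ] Hw H ρ,
      IsTimeDeriv ρ D → IsPointwiseLift ρ A Al →
      ∀ S : Hw H ρ →L[ℂ] Hw H ρ, IsInverseOf S (evo ρ M0 M1 D Al).closure →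
      ∀ (a : ℝ) (χ : Hw H ρ →L[ℂ] Hw H ρ), IsCutoff ρ a χ →
        χ.comp S = (χ.comp S).comp χ := by
  obtain ⟨ρ₀, hρ₀, hpos⟩ := hpos
  have hcoer : ∀ ρ > ρ₀, ∀ x : H, c * ‖x‖ ^ 2 ≤ (inner ℂ x (((ρ : ℂ) • M0 + M1) x)).re := by
    intro ρ hρ x
    simpa only [add_apply, inner_add_right, Complex.add_re, re_inner_reOp_apply]
      using hpos ρ hρ x
  have hM0pos : ∀ x : H, 0 ≤ (inner ℂ x (M0 x)).re := fun x =>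
    nonneg_of_forall_le_mul_add fun ρ hρ => (re_inner_smul_add_apply ρ M0 M1 x) ▸ hcoer ρ hρ x
  refine ⟨ρ₀, hρ₀, fun ρ hρ D Al hD hAl S hS a χ hχ => ?_⟩
  refine ContinuousLinearMap.comp_eq_comp_comp_of_coercive hc (inner_cutoff_sub_cutoff hχ)
    fun f => ?_
  exact mul_norm_cutoff_sq_le_of_mem_graph_closure_evo hM0.isSymmetric hM0pos (hcoer ρ hρ)
    hA.1 hA.2.2 hD hAl hχ (hS.1 f)
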